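/- Let n ≥ 2 be odd, let m' be an even positive integer, set d = gcd(2n, m'), m = m'/d, and m* = m'/2. Let h_1,…,h_{n−1} be integers each divisible by d. Then the system of congruences (n−j)·x_1 − n·x_{j+1} ≡ h_j/2 (mod m*) for 1 ≤ j ≤ n−2, together with x_1 ≡ h_{n−1}/2 (mod m*), has a solution (x_1,…,x_{n−1}) ∈ ℤ^{n−1}. -/
import Mathlib

theorem stmt12 (n m' : ℕ) (hn : 2 ≤ n) (hodd : Odd n) (hm : 0 < m') (heven : Even m')
    (h : Fin (n - 1) → ℤ)
    (hdvd : ∀ j : Fin (n - 1), ((Nat.gcd (2 * n) m' : ℕ) : ℤ) ∣ h j) :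
    ∃ x : Fin (n - 1) → ℤ,
      (∀ (j : ℕ) (hj : j + 1 < n - 1),
        ((m' / 2 : ℕ) : ℤ) ∣
          ((n : ℤ) - (j + 1)) * x ⟨0, by omega⟩ - (n : ℤ) * x ⟨j + 1, hj⟩ -
            h ⟨j, by omega⟩ / 2) ∧
      ((m' / 2 : ℕ) : ℤ) ∣ x ⟨0, by omega⟩ - h ⟨n - 2, by omega⟩ / 2 := by
  set m : ℕ := m' / 2 with hmdef
  obtain ⟨k, hk⟩ := heven
  have hm'2 : m' = 2 * m := by omega
  set g : ℕ := Nat.gcd n m with hg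
  have hd : Nat.gcd (2 * n) m' = 2 * g := by rw [hm'2, Nat.gcd_mul_left]
  have hdiv : ∀ j : Fin (n - 1), (g : ℤ) ∣ h j / 2 := by
    intro j
    obtain ⟨t, ht⟩ := hdvd j
    rw [hd] at ht
    refine ⟨t, ?_⟩
    have : h j = 2 * ((g : ℤ) * t) := by push_cast at ht ⊢; linarith
    rw [this, Int.mul_ediv_cancel_left _ two_ne_zero]
  have hlt : n - 2 < n - 1 := by omega
  set x1 : ℤ := h ⟨n - 2, hlt⟩ / 2 with hx1
  set c : Fin (n - 1) → ℤ := fun j => ((n : ℤ) - ((j : ℕ) + 1)) * x1 - h j / 2 with hc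
  have hgc : ∀ j, (g : ℤ) ∣ c j := by
    intro j
    exact dvd_sub (Dvd.dvd.mul_left (hdiv _) _) (hdiv j)
  have key : ∀ j : Fin (n - 1), ∃ y : ℤ, (m : ℤ) ∣ (n : ℤ) * y - c j := by
    intro j
    obtain ⟨t, ht⟩ := hgc j
    have bez : (g : ℤ) = (n : ℤ) * Int.gcdA (n : ℤ) (m : ℤ) + (m : ℤ) * Int.gcdB (n : ℤ) (m : ℤ) := by
      have := Int.gcd_eq_gcd_ab (n : ℤ) (m : ℤ)
      rwa [Int.gcd_natCast_natCast] at this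
    refine ⟨Int.gcdA (n : ℤ) (m : ℤ) * t, ⟨-(Int.gcdB (n : ℤ) (m : ℤ) * t), ?_⟩⟩
    rw [ht]
    linear_combination -t * bez
  refine ⟨fun i => if (i : ℕ) = 0 then x1 else (key ⟨(i : ℕ) - 1, by omega⟩).choose, ?_, ?_⟩
  · intro j hj
    beta_reduce
    simp only [Fin.val_mk, if_true, Nat.add_sub_cancel]
    rw [if_neg (Nat.succ_ne_zero j)]
    obtain ⟨u, hu⟩ := (key ⟨j, by omega⟩).choose_spec
    simp only [hc, Fin.val_mk] at hu
    refine ⟨-u, ?_⟩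
    push_cast at hu ⊢
    linarith
  · beta_reduce
    simp only [Fin.val_mk, if_true, sub_self, dvd_zero]
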